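/- Let d ≥ 1 and |k| < 1, and let ρ be a C¹ solution of ρ_t + ρ_x = 0 with ρ(t,0) = kρ(t,1)+(k-1)dW(t), W(t)=∫₀¹ρ(t,x)dx. Set ξ(t,x) := ρ(t,x) + dW(t) and V₂(t) := ∫₀¹ e^(-x) ξ²(t,x) dx. Then V̇₂(t) = (k² - e^(-1))ξ²(t,1) - V₂(t) + 2d(k-1)ξ(t,1)∫₀¹ e^(-x)ξ(t,x) dx, and there exists a constant A > 0 depending only on d and k such that V̇₂(t) ≤ -½V₂(t) + A·ξ²(t,1) for all t ≥ 0. -/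

import Mathlib

/-!
Since `Ẇ(t) = ∫₀¹ ρ_t = -∫₀¹ ρ_x = ρ(t,0) - ρ(t,1) = (k - 1) ξ(t,1)`, the shifted state `ξ` solves
`ξ_t + ξ_x = d (k - 1) ξ(t,1)` with `ξ(t,0) = k ξ(t,1)`. Differentiating `V₂` under the integral
sign and integrating `e^{-x} (ξ²)_x` by parts gives the identity for `V̇₂`; Young's inequality
`2 c e^{-x} ξ ≤ ½ e^{-x} ξ² + 2 c²` with `c = d (k - 1) ξ(t,1)` then absorbs the cross term.
-/

open intervalIntegral Function Set

theorem hasDerivAt_intervalIntegral_of_continuous {E : Type*} [NormedAddCommGroup E]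
    [NormedSpace ℝ E] {G G' : ℝ → ℝ → E} {a b : ℝ} (hG : Continuous (uncurry G))
    (hG' : Continuous (uncurry G')) (hderiv : ∀ t x, HasDerivAt (fun s => G s x) (G' t x) t)
    (t₀ : ℝ) :
    HasDerivAt (fun t => ∫ x in a..b, G t x) (∫ x in a..b, G' t₀ x) t₀ := by
  obtain ⟨C, hC⟩ := ((isCompact_closedBall t₀ 1).prod (isCompact_uIcc (a := a) (b := b))
    ).exists_bound_of_continuousOn hG'.continuousOn
  refine (hasDerivAt_integral_of_dominated_loc_of_deriv_le (bound := fun _ => C)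
    (Metric.ball_mem_nhds t₀ one_pos) ?_ ?_ ?_ ?_ intervalIntegrable_const ?_).2
  · exact .of_forall fun t => (hG.uncurry_left t).aestronglyMeasurable
  · exact (hG.uncurry_left t₀).intervalIntegrable _ _
  · exact (hG'.uncurry_left t₀).aestronglyMeasurable
  · exact .of_forall fun x hx t ht =>
      hC (t, x) ⟨Metric.ball_subset_closedBall ht, uIoc_subset_uIcc hx⟩
  · exact .of_forall fun x _ t _ => hderiv t x

noncomputable def derivFst (f : ℝ → ℝ → ℝ) (t x : ℝ) : ℝ := deriv (fun s => f s x) t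

noncomputable def derivSnd (f : ℝ → ℝ → ℝ) (t x : ℝ) : ℝ := deriv (fun y => f t y) x

namespace ContDiff

variable {f : ℝ → ℝ → ℝ} (hf : ContDiff ℝ 1 (uncurry f))
include hf

theorem hasDerivAt_derivFst (t x : ℝ) : HasDerivAt (fun s => f s x) (derivFst f t x) t :=
  ((hf.differentiable one_ne_zero).comp (differentiable_id.prodMk (differentiable_const x))
    t).hasDerivAt

theorem hasDerivAt_derivSnd (t x : ℝ) : HasDerivAt (fun y => f t y) (derivSnd f t x) x :=
  ((hf.differentiable one_ne_zero).comp ((differentiable_const t).prodMk differentiable_id)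
    x).hasDerivAt

theorem derivFst_eq_fderiv (t x : ℝ) :
    derivFst f t x = fderiv ℝ (uncurry f) (t, x) (1, 0) := by
  have h : HasDerivAt (fun s => uncurry f (s, x)) (fderiv ℝ (uncurry f) (t, x) (1, 0)) t :=
    (hf.differentiable one_ne_zero (t, x)).hasFDerivAt.comp_hasDerivAt (f := fun s => (s, x)) t
      ((hasDerivAt_id t).prodMk (hasDerivAt_const t x))
  exact h.deriv

theorem derivSnd_eq_fderiv (t x : ℝ) :
    derivSnd f t x = fderiv ℝ (uncurry f) (t, x) (0, 1) := by
  have h : HasDerivAt (fun y => uncurry f (t, y)) (fderiv ℝ (uncurry f) (t, x) (0, 1)) x :=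
    (hf.differentiable one_ne_zero (t, x)).hasFDerivAt.comp_hasDerivAt (f := fun y => (t, y)) x
      ((hasDerivAt_const x t).prodMk (hasDerivAt_id x))
  exact h.deriv

theorem continuous_derivFst : Continuous (uncurry (derivFst f)) := by
  rw [show uncurry (derivFst f) = fun p => fderiv ℝ (uncurry f) p (1, 0) from
    funext fun p => hf.derivFst_eq_fderiv p.1 p.2]
  exact (hf.continuous_fderiv one_ne_zero).clm_apply continuous_const

theorem continuous_derivSnd : Continuous (uncurry (derivSnd f)) := by
  rw [show uncurry (derivSnd f) = fun p => fderiv ℝ (uncurry f) p (0, 1) from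
    funext fun p => hf.derivSnd_eq_fderiv p.1 p.2]
  exact (hf.continuous_fderiv one_ne_zero).clm_apply continuous_const

theorem hasDerivAt_intervalIntegral (a b t : ℝ) :
    HasDerivAt (fun s => ∫ x in a..b, f s x) (∫ x in a..b, derivFst f t x) t :=
  hasDerivAt_intervalIntegral_of_continuous hf.continuous hf.continuous_derivFst
    hf.hasDerivAt_derivFst t

theorem contDiff_intervalIntegral (a b : ℝ) : ContDiff ℝ 1 (fun t => ∫ x in a..b, f t x) := by
  refine contDiff_one_iff_deriv.2
    ⟨fun t => (hf.hasDerivAt_intervalIntegral a b t).differentiableAt, ?_⟩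
  rw [funext fun t => (hf.hasDerivAt_intervalIntegral a b t).deriv]
  exact continuous_parametric_intervalIntegral_of_continuous' hf.continuous_derivFst a b

end ContDiff

open Real

theorem integral_exp_neg_mul_deriv_sq {g g' : ℝ → ℝ} {a b : ℝ}
    (hg : ∀ x ∈ uIcc a b, HasDerivAt g (g' x) x) (hg' : ContinuousOn g' (uIcc a b)) :
    ∫ x in a..b, exp (-x) * (2 * g x * g' x) =
      exp (-b) * g b ^ 2 - exp (-a) * g a ^ 2 + ∫ x in a..b, exp (-x) * g x ^ 2 := by
  have hgc : ContinuousOn g (uIcc a b) := fun x hx => (hg x hx).continuousAt.continuousWithinAt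
  have hexp : Continuous fun x : ℝ => exp (-x) := by fun_prop
  have hint₁ : IntervalIntegrable (fun x => -exp (-x) * g x ^ 2) MeasureTheory.volume a b :=
    ((hexp.neg.continuousOn).mul (hgc.pow 2)).intervalIntegrable
  have hint₂ :
      IntervalIntegrable (fun x => exp (-x) * (2 * g x * g' x)) MeasureTheory.volume a b :=
    (hexp.continuousOn.mul ((continuousOn_const.mul hgc).mul hg')).intervalIntegrable
  have hexp' (x : ℝ) : HasDerivAt (fun x => exp (-x)) (-exp (-x)) x := by
    simpa using (hasDerivAt_neg x).exp
  have hsq (x : ℝ) (hx : x ∈ uIcc a b) : HasDerivAt (fun x => g x ^ 2) (2 * g x * g' x) x :=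
    ((hg x hx).fun_pow 2).congr_deriv (by push_cast; ring)
  have hftc := integral_eq_sub_of_hasDerivAt
    (f := fun x => exp (-x) * g x ^ 2) (fun x hx => (hexp' x).mul (hsq x hx))
    (hint₁.add hint₂)
  rw [integral_add hint₁ hint₂] at hftc
  simp only [neg_mul, integral_neg] at hftc
  linear_combination hftc

theorem two_mul_mul_integral_exp_neg_mul_le {u : ℝ → ℝ} (hu : Continuous u) (c : ℝ) :
    2 * c * ∫ x in (0 : ℝ)..1, exp (-x) * u x ≤
      1 / 2 * (∫ x in (0 : ℝ)..1, exp (-x) * u x ^ 2) + 2 * c ^ 2 := by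
  have hpoint : ∀ x ∈ Icc (0 : ℝ) 1,
      2 * c * (exp (-x) * u x) ≤ 1 / 2 * (exp (-x) * u x ^ 2) + 2 * c ^ 2 := by
    intro x hx
    have hexp : exp (-x) ≤ 1 := exp_le_one_iff.2 (by linarith [hx.1])
    nlinarith [mul_nonneg (exp_pos (-x)).le (sq_nonneg (u x - 2 * c)), sq_nonneg c]
  have hmono := integral_mono_on (μ := MeasureTheory.volume) zero_le_one
    ((by fun_prop : Continuous _).intervalIntegrable _ _)
    ((by fun_prop : Continuous _).intervalIntegrable _ _) hpoint
  rwa [integral_const_mul, integral_add ((by fun_prop : Continuous _).intervalIntegrable _ _)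
    intervalIntegrable_const, integral_const_mul,
    intervalIntegral.integral_const, sub_zero, one_smul] at hmono

theorem integral_derivFst_eq_sub_of_transport {f : ℝ → ℝ → ℝ} (hf : ContDiff ℝ 1 (uncurry f))
    {a b t : ℝ} (htr : ∀ x ∈ uIcc a b, derivFst f t x + derivSnd f t x = 0) :
    ∫ x in a..b, derivFst f t x = f t a - f t b := by
  rw [integral_congr fun x hx => eq_neg_of_add_eq_zero_left (htr x hx), integral_neg,
    integral_eq_sub_of_hasDerivAt (fun x _ => hf.hasDerivAt_derivSnd t x)
      ((hf.continuous_derivSnd.uncurry_left t).intervalIntegrable _ _)]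
  ring

theorem hasDerivAt_integral_exp_neg_mul_sq {u : ℝ → ℝ → ℝ} (hu : ContDiff ℝ 1 (uncurry u))
    (a b t : ℝ) :
    HasDerivAt (fun s => ∫ x in a..b, exp (-x) * u s x ^ 2)
      (∫ x in a..b, exp (-x) * (2 * u t x * derivFst u t x)) t := by
  refine hasDerivAt_intervalIntegral_of_continuous (G := fun s x => exp (-x) * u s x ^ 2)
    (G' := fun s x => exp (-x) * (2 * u s x * derivFst u s x))
    ?_ ?_ (fun s x => (((hu.hasDerivAt_derivFst s x).fun_pow 2).const_mul (exp (-x))).congr_deriv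
      (by push_cast; ring)) t
  · exact (continuous_snd.neg.rexp).mul (hu.continuous.pow 2)
  · exact (continuous_snd.neg.rexp).mul
      ((continuous_const.mul hu.continuous).mul hu.continuous_derivFst)

theorem hasDerivAt_integral_exp_neg_mul_sq_of_transport {u : ℝ → ℝ → ℝ}
    (hu : ContDiff ℝ 1 (uncurry u)) {a b t f : ℝ}
    (htr : ∀ x ∈ uIcc a b, derivFst u t x + derivSnd u t x = f) :
    HasDerivAt (fun s => ∫ x in a..b, exp (-x) * u s x ^ 2)
      (exp (-a) * u t a ^ 2 - exp (-b) * u t b ^ 2 - (∫ x in a..b, exp (-x) * u t x ^ 2) +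
        2 * f * ∫ x in a..b, exp (-x) * u t x) t := by
  convert hasDerivAt_integral_exp_neg_mul_sq hu a b t using 1
  have hux := hu.continuous_derivSnd.uncurry_left t
  have hut := hu.continuous.uncurry_left t
  have htransport : ∫ x in a..b, exp (-x) * (2 * u t x * derivFst u t x) =
      ∫ x in a..b, 2 * f * (exp (-x) * u t x) - exp (-x) * (2 * u t x * derivSnd u t x) :=
    integral_congr fun x hx => by linear_combination (2 * exp (-x) * u t x) * htr x hx
  rw [htransport, integral_sub ((by fun_prop : Continuous _).intervalIntegrable _ _)
      ((by fun_prop : Continuous _).intervalIntegrable _ _), integral_const_mul,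
    integral_exp_neg_mul_deriv_sq (fun x _ => hu.hasDerivAt_derivSnd t x) hux.continuousOn]
  ring

theorem stmt_15_general (d k : ℝ) (ρ : ℝ → ℝ → ℝ)
    (hρ : ContDiff ℝ 1 (fun p : ℝ × ℝ => ρ p.1 p.2))
    (hpde : ∀ t ≥ (0:ℝ), ∀ x ∈ Set.Icc (0:ℝ) 1,
      deriv (fun s => ρ s x) t + deriv (fun y => ρ t y) x = 0)
    (hbc : ∀ t ≥ (0:ℝ),
      ρ t 0 = k * ρ t 1 + (k - 1) * d * ∫ x in (0:ℝ)..1, ρ t x) :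
    let W := fun t => ∫ x in (0:ℝ)..1, ρ t x
    let ξ := fun t x => ρ t x + d * W t
    let V₂ := fun t => ∫ x in (0:ℝ)..1, Real.exp (-x) * ξ t x ^ 2
    ∃ A > 0, ∀ t ≥ (0:ℝ), ∃ D : ℝ, HasDerivAt V₂ D t ∧
      D = (k ^ 2 - Real.exp (-1)) * ξ t 1 ^ 2 - V₂ t +
        2 * d * (k - 1) * ξ t 1 * ∫ x in (0:ℝ)..1, Real.exp (-x) * ξ t x ∧
      D ≤ -(1 / 2) * V₂ t + A * ξ t 1 ^ 2 := by
  intro W ξ V₂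
  have hW : ContDiff ℝ 1 W := hρ.contDiff_intervalIntegral 0 1
  have hξ : ContDiff ℝ 1 (uncurry ξ) := hρ.add (contDiff_const.mul (hW.comp contDiff_fst))
  refine ⟨k ^ 2 + 2 * d ^ 2 * (k - 1) ^ 2 + 1, by positivity, fun t ht => ?_⟩
  have hpde_t (x : ℝ) (hx : x ∈ uIcc 0 1) : derivFst ρ t x + derivSnd ρ t x = 0 :=
    hpde t ht x (by rwa [uIcc_of_le zero_le_one] at hx)
  have hξ₀ : ξ t 0 = k * ξ t 1 := by
    simp only [ξ, W]
    rw [hbc t ht]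
    ring
  have hW' : deriv W t = (k - 1) * ξ t 1 := by
    rw [(hρ.hasDerivAt_intervalIntegral 0 1 t).deriv,
      integral_derivFst_eq_sub_of_transport hρ hpde_t, hbc t ht]
    ring
  have htransport (x : ℝ) (hx : x ∈ uIcc 0 1) :
      derivFst ξ t x + derivSnd ξ t x = d * (k - 1) * ξ t 1 := by
    have hξt : derivFst ξ t x = derivFst ρ t x + d * deriv W t :=
      ((hρ.hasDerivAt_derivFst t x).add
        ((hW.differentiable one_ne_zero t).hasDerivAt.const_mul d)).deriv
    have hξx : derivSnd ξ t x = derivSnd ρ t x :=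
      ((hρ.hasDerivAt_derivSnd t x).add_const (d * W t)).deriv
    rw [hξt, hξx, hW']
    linear_combination hpde_t x hx
  have hV₂ := hasDerivAt_integral_exp_neg_mul_sq_of_transport hξ htransport
  rw [neg_zero, exp_zero, hξ₀] at hV₂
  refine ⟨_, hV₂, by ring, ?_⟩
  have hyoung := two_mul_mul_integral_exp_neg_mul_le (hξ.continuous.uncurry_left t)
    (d * (k - 1) * ξ t 1)
  linarith [mul_nonneg (exp_pos (-1)).le (sq_nonneg (ξ t 1)), sq_nonneg (ξ t 1)]

theorem stmt_15 (d k : ℝ) (hd : 1 ≤ d) (hk : |k| < 1) (ρ : ℝ → ℝ → ℝ)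
    (hρ : ContDiff ℝ 1 (fun p : ℝ × ℝ => ρ p.1 p.2))
    (hpde : ∀ t ≥ (0:ℝ), ∀ x ∈ Set.Icc (0:ℝ) 1,
      deriv (fun s => ρ s x) t + deriv (fun y => ρ t y) x = 0)
    (hbc : ∀ t ≥ (0:ℝ),
      ρ t 0 = k * ρ t 1 + (k - 1) * d * ∫ x in (0:ℝ)..1, ρ t x) :
    let W := fun t => ∫ x in (0:ℝ)..1, ρ t x
    let ξ := fun t x => ρ t x + d * W t
    let V₂ := fun t => ∫ x in (0:ℝ)..1, Real.exp (-x) * ξ t x ^ 2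
    ∃ A > 0, ∀ t ≥ (0:ℝ), ∃ D : ℝ, HasDerivAt V₂ D t ∧
      D = (k ^ 2 - Real.exp (-1)) * ξ t 1 ^ 2 - V₂ t +
        2 * d * (k - 1) * ξ t 1 * ∫ x in (0:ℝ)..1, Real.exp (-x) * ξ t x ∧
      D ≤ -(1 / 2) * V₂ t + A * ξ t 1 ^ 2 :=
  stmt_15_general d k ρ hρ hpde hbc
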